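/- arXiv:1803.10163 — 3 statements merged into one kernel-verified Lean document; each statement's English description precedes it below -/
import Mathlib

section
/- Let I and J be disjoint finite subsets of L, let (p_M)_{M ∈ D_I} and (q_N)_{N ∈ D_J} be probability distributions, and set ρ_I = Σ_{M ∈ D_I} p_M |f_M⟩⟨f_M|, ρ_J = Σ_{N ∈ D_J} q_N |f_N⟩⟨f_N|, and ρ = Σ_{M ∈ D_I} Σ_{N ∈ D_J} p_M q_N |f_{MN}⟩⟨f_{MN}|, where MN denotes concatenation of the sequences M and N. Then Tr(ρ a) = Tr(ρ_I a) for all a ∈ A(I) and Tr(ρ b) = Tr(ρ_J b) for all b ∈ A(J). -/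
/-!
The `f_M` with `M` repetition-free are unimodular multiples of the occupation-number basis vectors
`e_U`, `U = M.toFinset`, so all three traces are weighted sums of diagonal entries `⟨e_U, x e_U⟩`.
For `T` disjoint from `I`, the Jordan–Wigner string `W_T : e_S ↦ ±e_{S ∆ T}` is unitary and
commutes with every `a*_l`, `l ∈ I`, hence with the whole star algebra `A(I)`. Since
`W_T e_S = ±e_{S ∪ T}` for `S` disjoint from `T`, this gives `⟨e_{S∪T}, a e_{S∪T}⟩ = ⟨e_S, a e_S⟩`
for `a ∈ A(I)`, and summing out `q` (which sums to `1`) leaves `Tr(ρ_I a)`; symmetrically for `J`.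
-/

noncomputable section
open scoped InnerProductSpace ComplexConjugate
open ContinuousLinearMap

namespace Fermion

variable (L : Type) [Fintype L] [LinearOrder L]

/-- The fermionic Fock space over the one-particle space `h = ℓ²(L)`, realized concretely
via its orthonormal basis indexed by the finite subsets of `L` (the vectors `f_M`). -/
abbrev FockSpace := EuclideanSpace ℂ (Finset L)

variable {L}

/-- The vacuum vector `Ψ = f_∅`. -/
def vac : FockSpace L := EuclideanSpace.single ∅ 1

/-- Jordan–Wigner sign factor. -/
def jwSign (l : L) (S : Finset L) : ℂ := (-1 : ℂ) ^ (S.filter (fun k => k < l)).card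

/-- The creation operator `a*_l = a*(e_l)`. -/
def cre (l : L) : FockSpace L →L[ℂ] FockSpace L :=
  LinearMap.toContinuousLinearMap <|
    (EuclideanSpace.basisFun (Finset L) ℂ).toBasis.constr ℂ fun S =>
      if l ∈ S then 0 else jwSign l S • EuclideanSpace.single (insert l S) 1

/-- The annihilation operator `a_l = a(e_l)`. -/
def ann (l : L) : FockSpace L →L[ℂ] FockSpace L := ContinuousLinearMap.adjoint (cre l)

/-- The vector `f_{(l_1,…,l_n)} = a*_{l_1} ⋯ a*_{l_n} Ψ  (= P (e_{l_1} ⊗ ⋯ ⊗ e_{l_n}))`. -/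
def fvec (M : List L) : FockSpace L := M.foldr (fun l v => cre l v) vac

/-- The algebra `A(I)` : the unital *-subalgebra of `B(H)` generated by `{a_l : l ∈ I}`. -/
def A (I : Finset L) : StarSubalgebra ℂ (FockSpace L →L[ℂ] FockSpace L) :=
  StarAlgebra.adjoin ℂ (ann '' (I : Set L))

/-- The trace on `B(H)`. -/
def Tr (T : FockSpace L →L[ℂ] FockSpace L) : ℂ := LinearMap.trace ℂ (FockSpace L) T

/-- The rank-one operator `|x⟩⟨y|`. -/
def ketbra (x y : FockSpace L) : FockSpace L →L[ℂ] FockSpace L :=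
  (ContinuousLinearMap.toSpanSingleton ℂ x).comp (innerSL ℂ y)

/-- A valid choice of `D_I`: `D S` enumerates the finite set `S` without repetitions. -/
def IsEnum (D : Finset L → List L) : Prop := ∀ S : Finset L, (D S).Nodup ∧ (D S).toFinset = S

/-- The entangled vector `Φ = Σ_{M ∈ D_I} p_M^{1/2} f_{M ι(M)}`. -/
def Phi (D : Finset L → List L) (p : Finset L → ℝ) (I : Finset L) (ι : L → L) : FockSpace L :=
  ∑ S ∈ I.powerset, (Real.sqrt (p S) : ℂ) • fvec (D S ++ (D S).map ι)

/-- The state `φ(x) = ⟨Φ, xΦ⟩`. -/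
def phi (D : Finset L → List L) (p : Finset L → ℝ) (I : Finset L) (ι : L → L)
    (x : FockSpace L →L[ℂ] FockSpace L) : ℂ :=
  ⟪Phi D p I ι, x (Phi D p I ι)⟫_ℂ

end Fermion

open scoped symmDiff
open Finset

theorem Finset.card_add_card_eq_card_symmDiff_add {α : Type*} [DecidableEq α] (A B : Finset α) :
    #A + #B = #(A ∆ B) + 2 * #(A ∩ B) := by
  rw [symmDiff_eq_sup_sdiff_inf, sup_eq_union, inf_eq_inter,
    card_sdiff_of_subset inter_subset_union, ← card_union_add_card_inter]
  have := card_le_card (inter_subset_union (s := A) (t := B))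
  omega

theorem Finset.filter_symmDiff {α : Type*} [DecidableEq α] (p : α → Prop) [DecidablePred p]
    (A B : Finset α) : (A ∆ B).filter p = A.filter p ∆ B.filter p := by
  ext x
  simp only [mem_filter, mem_symmDiff]
  tauto

theorem Commute.star_right_of_mem_unitary {R : Type*} [Monoid R] [StarMul R] {x u : R}
    (hu : u ∈ unitary R) (h : Commute x u) : Commute x (star u) :=
  ((commute_unitary_iff_star_left_conjugate (Unitary.star_mem hu)).mpr <| by
    simpa using (commute_unitary_iff_star_right_conjugate hu).mp h.symm).symm

namespace Fermion

section

variable {L : Type} [LinearOrder L]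

theorem jwSign_symmDiff (l : L) (A B : Finset L) :
    jwSign l (A ∆ B) = jwSign l A * jwSign l B := by
  have h := card_add_card_eq_card_symmDiff_add (A.filter (· < l)) (B.filter (· < l))
  rw [jwSign, jwSign, jwSign, filter_symmDiff, ← pow_add, h, pow_add, pow_mul]
  simp

theorem norm_jwSign (l : L) (S : Finset L) : ‖jwSign l S‖ = 1 := by
  simp [jwSign]

theorem conj_jwSign (l : L) (S : Finset L) : conj (jwSign l S) = jwSign l S := by
  simp [jwSign]

theorem jwSign_mul_self (l : L) (S : Finset L) : jwSign l S * jwSign l S = 1 := by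
  rw [jwSign, ← mul_pow]; norm_num

def dressingSign (T S : Finset L) : ℂ := ∏ s ∈ S, jwSign s T

theorem conj_dressingSign (T S : Finset L) : conj (dressingSign T S) = dressingSign T S := by
  simp only [dressingSign, map_prod, conj_jwSign]

theorem dressingSign_mul_self (T S : Finset L) : dressingSign T S * dressingSign T S = 1 := by
  rw [dressingSign, ← prod_mul_distrib]
  exact prod_eq_one fun s _ => jwSign_mul_self s T

theorem dressingSign_insert {T S : Finset L} {l : L} (hl : l ∉ S) :
    dressingSign T (insert l S) = jwSign l T * dressingSign T S :=
  prod_insert hl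

theorem IsEnum.nodup_append {D : Finset L → List L} (hD : IsEnum D) {S T : Finset L}
    (hST : Disjoint S T) : (D S ++ D T).Nodup :=
  (hD S).1.append (hD T).1 <| List.disjoint_toFinset_iff_disjoint.mp <| by
    rwa [(hD S).2, (hD T).2]

theorem IsEnum.toFinset_append {D : Finset L → List L} (hD : IsEnum D) (S T : Finset L) :
    (D S ++ D T).toFinset = S ∪ T := by
  rw [List.toFinset_append, (hD S).2, (hD T).2]

end

variable {L : Type} [Fintype L]

theorem Tr_sum {ι : Type*} (s : Finset ι) (f : ι → FockSpace L →L[ℂ] FockSpace L) :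
    Tr (∑ i ∈ s, f i) = ∑ i ∈ s, Tr (f i) := by
  simp only [Tr, toLinearMap_sum, map_sum]

theorem Tr_smul (c : ℂ) (f : FockSpace L →L[ℂ] FockSpace L) : Tr (c • f) = c * Tr f := by
  simp only [Tr, toLinearMap_smul, map_smul, smul_eq_mul]

abbrev fockBasis : OrthonormalBasis (Finset L) ℂ (FockSpace L) := EuclideanSpace.basisFun _ ℂ

theorem ext_fockBasis {f g : FockSpace L →L[ℂ] FockSpace L}
    (h : ∀ S, f (fockBasis S) = g (fockBasis S)) : f = g :=
  ContinuousLinearMap.coe_injective <| fockBasis.toBasis.ext h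

theorem Tr_ketbra_mul (x y : FockSpace L) (a : FockSpace L →L[ℂ] FockSpace L) :
    Tr (ketbra x y * a) = ⟪y, a x⟫_ℂ := by
  have h : ((ketbra x y * a : FockSpace L →L[ℂ] FockSpace L) : FockSpace L →ₗ[ℂ] FockSpace L) =
      (innerSL ℂ y ∘L a : FockSpace L →ₗ[ℂ] ℂ).smulRight x := by
    ext v; simp [ketbra]
  rw [Tr, h, LinearMap.trace_smulRight]
  rfl

def diagEntry (x : FockSpace L →L[ℂ] FockSpace L) (S : Finset L) : ℂ :=
  ⟪fockBasis S, x (fockBasis S)⟫_ℂ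

variable [LinearOrder L]

theorem cre_fockBasis (l : L) (S : Finset L) :
    cre l (fockBasis S) = if l ∈ S then 0 else jwSign l S • fockBasis (insert l S) := by
  change LinearMap.toContinuousLinearMap _ ((EuclideanSpace.basisFun _ ℂ).toBasis S) = _
  rw [LinearMap.coe_toContinuousLinearMap', Module.Basis.constr_basis]
  simp

/-- The Jordan–Wigner string of the modes in `T`; the phase `dressingSign` is what makes it commute
with `cre l` for every `l ∉ T` (`jwSign l` is multiplicative under `∆`). -/
def dressing (T : Finset L) : FockSpace L →L[ℂ] FockSpace L :=
  LinearMap.toContinuousLinearMap <|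
    fockBasis.toBasis.constr ℂ fun S => dressingSign T S • fockBasis (S ∆ T)

theorem dressing_fockBasis (T S : Finset L) :
    dressing T (fockBasis S) = dressingSign T S • fockBasis (S ∆ T) := by
  rw [dressing, LinearMap.coe_toContinuousLinearMap', ← OrthonormalBasis.coe_toBasis,
    Module.Basis.constr_basis, OrthonormalBasis.coe_toBasis]

theorem adjoint_dressing_fockBasis (T S : Finset L) :
    adjoint (dressing T) (fockBasis S) = dressingSign T (S ∆ T) • fockBasis (S ∆ T) := by
  refine InnerProductSpace.ext_inner_left_basis fockBasis.toBasis fun R => ?_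
  rw [OrthonormalBasis.coe_toBasis, adjoint_inner_right, dressing_fockBasis, inner_smul_left,
    inner_smul_right, conj_dressingSign, orthonormal_iff_ite.mp fockBasis.orthonormal,
    orthonormal_iff_ite.mp fockBasis.orthonormal]
  by_cases h : R = S ∆ T
  · simp [h]
  · have h' : R ∆ T ≠ S := fun h' => h (by rw [← h', symmDiff_symmDiff_cancel_right])
    simp [h, h']

theorem dressing_mem_unitary (T : Finset L) :
    dressing T ∈ unitary (FockSpace L →L[ℂ] FockSpace L) := by
  rw [Unitary.mem_iff, star_eq_adjoint]
  constructor <;> refine ext_fockBasis fun S => ?_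
  · rw [mul_apply_eq_comp, dressing_fockBasis, map_smul, adjoint_dressing_fockBasis,
      symmDiff_symmDiff_cancel_right, smul_smul, dressingSign_mul_self, one_smul,
      one_apply_eq_self]
  · rw [mul_apply_eq_comp, adjoint_dressing_fockBasis, map_smul, dressing_fockBasis,
      symmDiff_symmDiff_cancel_right, smul_smul, dressingSign_mul_self, one_smul,
      one_apply_eq_self]

theorem commute_cre_dressing {l : L} {T : Finset L} (hl : l ∉ T) :
    Commute (cre l) (dressing T) := by
  refine ext_fockBasis fun S => ?_
  have hmem : l ∈ S ∆ T ↔ l ∈ S := by rw [mem_symmDiff]; tauto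
  rw [mul_apply_eq_comp, mul_apply_eq_comp, dressing_fockBasis, map_smul, cre_fockBasis,
    cre_fockBasis]
  by_cases hS : l ∈ S
  · simp [hS, hmem.mpr hS]
  · have h : insert l S ∆ T = insert l (S ∆ T) := by
      ext x; by_cases hx : x = l <;> simp [mem_symmDiff, hx, hS, hl]
    rw [if_neg hS, if_neg (mt hmem.mp hS), map_smul, dressing_fockBasis, smul_smul, smul_smul,
      dressingSign_insert hS, jwSign_symmDiff, h]
    congr 1
    ring

theorem A_le_centralizer_dressing {I T : Finset L} (hIT : Disjoint I T) :
    A I ≤ StarSubalgebra.centralizer ℂ {dressing T} := by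
  refine StarAlgebra.adjoin_le ?_
  rintro _ ⟨l, hl, rfl⟩
  have hcomm := commute_cre_dressing (disjoint_left.mp hIT hl)
  have hcomm_star := hcomm.star_right_of_mem_unitary (dressing_mem_unitary T)
  rw [SetLike.mem_coe, StarSubalgebra.mem_centralizer_iff]
  rintro _ rfl
  rw [ann, ← star_eq_adjoint]
  exact ⟨by simpa using hcomm_star.star_star.symm.eq, hcomm.star_star.symm.eq⟩

theorem diagEntry_union_of_mem_A {I S T : Finset L} (hIT : Disjoint I T) (hST : Disjoint S T)
    {a : FockSpace L →L[ℂ] FockSpace L} (ha : a ∈ A I) :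
    diagEntry a (S ∪ T) = diagEntry a S := by
  have hW : dressing T (fockBasis S) = dressingSign T S • fockBasis (S ∪ T) := by
    rw [dressing_fockBasis, hST.symmDiff_eq_sup, sup_eq_union]
  have hcomm : dressing T * a = a * dressing T :=
    ((StarSubalgebra.mem_centralizer_iff ℂ).mp (A_le_centralizer_dressing hIT ha) _ rfl).1
  calc diagEntry a (S ∪ T)
      = ⟪dressing T (fockBasis S), a (dressing T (fockBasis S))⟫_ℂ := by
        rw [hW, map_smul, inner_smul_left, inner_smul_right, conj_dressingSign, ← mul_assoc,
          dressingSign_mul_self, one_mul, diagEntry]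
    _ = ⟪dressing T (fockBasis S), dressing T (a (fockBasis S))⟫_ℂ := by
        rw [← mul_apply_eq_comp a, ← hcomm, mul_apply_eq_comp]
    _ = diagEntry a S := inner_map_map_of_mem_unitary (dressing_mem_unitary T) _ _

theorem fvec_eq_smul_fockBasis {M : List L} (hM : M.Nodup) :
    ∃ c : ℂ, ‖c‖ = 1 ∧ fvec M = c • fockBasis M.toFinset := by
  induction M with
  | nil => exact ⟨1, by simp, by simp [fvec, vac]⟩
  | cons l M ih =>
    rw [List.nodup_cons] at hM
    obtain ⟨c, hc, hf⟩ := ih hM.2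
    have hl : l ∉ M.toFinset := by simpa using hM.1
    refine ⟨c * jwSign l M.toFinset, by rw [norm_mul, hc, norm_jwSign, one_mul], ?_⟩
    change cre l (fvec M) = _
    rw [hf, map_smul, cre_fockBasis, if_neg hl, List.toFinset_cons, smul_smul]

theorem Tr_ketbra_fvec_mul {M : List L} (hM : M.Nodup) (a : FockSpace L →L[ℂ] FockSpace L) :
    Tr (ketbra (fvec M) (fvec M) * a) = diagEntry a M.toFinset := by
  obtain ⟨c, hc, hf⟩ := fvec_eq_smul_fockBasis hM
  rw [Tr_ketbra_mul, hf, map_smul, inner_smul_left, inner_smul_right, ← mul_assoc,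
    Complex.conj_mul', hc, Complex.ofReal_one, one_pow, one_mul, diagEntry]

theorem Tr_sum_smul_ketbra_fvec_mul {D : Finset L → List L} (hD : IsEnum D)
    (s : Finset (Finset L)) (w : Finset L → ℂ) (a : FockSpace L →L[ℂ] FockSpace L) :
    Tr ((∑ S ∈ s, w S • ketbra (fvec (D S)) (fvec (D S))) * a) =
      ∑ S ∈ s, w S * diagEntry a S := by
  simp only [sum_mul, smul_mul_assoc, Tr_sum, Tr_smul, Tr_ketbra_fvec_mul (hD _).1, (hD _).2]

theorem Tr_sum_sum_smul_ketbra_fvec_append_mul {D : Finset L → List L} (hD : IsEnum D)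
    {s t : Finset (Finset L)} (hst : ∀ S ∈ s, ∀ T ∈ t, Disjoint S T)
    (w : Finset L → Finset L → ℂ) (a : FockSpace L →L[ℂ] FockSpace L) :
    Tr ((∑ S ∈ s, ∑ T ∈ t, w S T • ketbra (fvec (D S ++ D T)) (fvec (D S ++ D T))) * a) =
      ∑ S ∈ s, ∑ T ∈ t, w S T * diagEntry a (S ∪ T) := by
  simp only [sum_mul, smul_mul_assoc, Tr_sum, Tr_smul]
  refine sum_congr rfl fun S hS => sum_congr rfl fun T hT => ?_
  rw [Tr_ketbra_fvec_mul (hD.nodup_append (hst S hS T hT)), hD.toFinset_append]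

theorem product_state_reduces_general
    {L : Type} [Fintype L] [LinearOrder L]
    (I J : Finset L) (hIJ : Disjoint I J)
    (D : Finset L → List L) (hD : IsEnum D)
    (p q : Finset L → ℝ)
    (hp1 : ∑ S ∈ I.powerset, p S = 1)
    (hq1 : ∑ T ∈ J.powerset, q T = 1) :
    (∀ a ∈ A I,
      Tr ((∑ S ∈ I.powerset, ∑ T ∈ J.powerset,
            ((p S * q T : ℝ) : ℂ) • ketbra (fvec (D S ++ D T)) (fvec (D S ++ D T))) * a)
        = Tr ((∑ S ∈ I.powerset, ((p S : ℝ) : ℂ) • ketbra (fvec (D S)) (fvec (D S))) * a)) ∧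
    (∀ b ∈ A J,
      Tr ((∑ S ∈ I.powerset, ∑ T ∈ J.powerset,
            ((p S * q T : ℝ) : ℂ) • ketbra (fvec (D S ++ D T)) (fvec (D S ++ D T))) * b)
        = Tr ((∑ T ∈ J.powerset, ((q T : ℝ) : ℂ) • ketbra (fvec (D T)) (fvec (D T))) * b)) := by
  have hdisj : ∀ S ∈ I.powerset, ∀ T ∈ J.powerset, Disjoint S T := fun S hS T hT =>
    hIJ.mono (mem_powerset.mp hS) (mem_powerset.mp hT)
  have hp1' : ∑ S ∈ I.powerset, (p S : ℂ) = 1 := by exact_mod_cast hp1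
  have hq1' : ∑ T ∈ J.powerset, (q T : ℂ) = 1 := by exact_mod_cast hq1
  refine ⟨fun a ha => ?_, fun b hb => ?_⟩
  · rw [Tr_sum_sum_smul_ketbra_fvec_append_mul hD hdisj, Tr_sum_smul_ketbra_fvec_mul hD,
      ← mul_one (∑ S ∈ I.powerset, ((p S : ℝ) : ℂ) * diagEntry a S), ← hq1', sum_mul_sum]
    refine sum_congr rfl fun S hS => sum_congr rfl fun T hT => ?_
    rw [diagEntry_union_of_mem_A (hIJ.mono_right (mem_powerset.mp hT)) (hdisj S hS T hT) ha]
    push_cast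
    ring
  · rw [Tr_sum_sum_smul_ketbra_fvec_append_mul hD hdisj, Tr_sum_smul_ketbra_fvec_mul hD,
      ← one_mul (∑ T ∈ J.powerset, ((q T : ℝ) : ℂ) * diagEntry b T), ← hp1', sum_mul_sum]
    refine sum_congr rfl fun S hS => sum_congr rfl fun T hT => ?_
    rw [union_comm, diagEntry_union_of_mem_A (hIJ.symm.mono_right (mem_powerset.mp hS))
      (hdisj S hS T hT).symm hb]
    push_cast
    ring

/-- Let `I` and `J` be disjoint finite subsets of `L`, let `(p_M)_{M ∈ D_I}`
and `(q_N)_{N ∈ D_J}` be probability distributions, and set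
`ρ_I = Σ_{M ∈ D_I} p_M |f_M⟩⟨f_M|`, `ρ_J = Σ_{N ∈ D_J} q_N |f_N⟩⟨f_N|` and
`ρ = Σ_{M ∈ D_I} Σ_{N ∈ D_J} p_M q_N |f_{MN}⟩⟨f_{MN}|` (`MN` the concatenation).
Then `Tr(ρ a) = Tr(ρ_I a)` for all `a ∈ A(I)` and `Tr(ρ b) = Tr(ρ_J b)` for all `b ∈ A(J)`. -/
theorem product_state_reduces
    {L : Type} [Fintype L] [LinearOrder L]
    (I J : Finset L) (hIJ : Disjoint I J)
    (D : Finset L → List L) (hD : IsEnum D)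
    (p q : Finset L → ℝ)
    (hp0 : ∀ S ∈ I.powerset, 0 ≤ p S) (hp1 : ∑ S ∈ I.powerset, p S = 1)
    (hq0 : ∀ T ∈ J.powerset, 0 ≤ q T) (hq1 : ∑ T ∈ J.powerset, q T = 1) :
    (∀ a ∈ A I,
      Tr ((∑ S ∈ I.powerset, ∑ T ∈ J.powerset,
            ((p S * q T : ℝ) : ℂ) • ketbra (fvec (D S ++ D T)) (fvec (D S ++ D T))) * a)
        = Tr ((∑ S ∈ I.powerset, ((p S : ℝ) : ℂ) • ketbra (fvec (D S)) (fvec (D S))) * a)) ∧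
    (∀ b ∈ A J,
      Tr ((∑ S ∈ I.powerset, ∑ T ∈ J.powerset,
            ((p S * q T : ℝ) : ℂ) • ketbra (fvec (D S ++ D T)) (fvec (D S ++ D T))) * b)
        = Tr ((∑ T ∈ J.powerset, ((q T : ℝ) : ℂ) • ketbra (fvec (D T)) (fvec (D T))) * b)) :=
  product_state_reduces_general I J hIJ D hD p q hp1 hq1

end Fermion
end
end

section
/- (Main example) Let I ⊆ L be finite, ι : I → J a bijection onto J ⊆ L with I ∩ J = ∅, and σ : L → L a permutation of I (identity on L\I). Let U be the unitary on H with U f_∅ = f_∅, U f_{(l_1,…,l_n)} = f_{(σ(l_1),…,σ(l_n))}, and let V be the unitary with V f_∅ = f_∅, V f_{(l_1,…,l_n)} = f_{(σ^ι(l_1),…,σ^ι(l_n))}, where σ^ι = ι∘σ∘ι^{-1} on J and the identity on L\J. Define τ : A(I) → A(I) by τ(a) = (1/2)(U* a U + U a U*) and τ^ι : A(ι(I)) → A(ι(I)) by τ^ι(b) = (1/2)(V* b V + V b V*). Let (p_M)_{M ∈ D_I} be a probability distribution such that p_M = p_N whenever M, N ∈ D_I have the same length, and set Φ = Σ_{M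 ∈ D_I} p_M^{1/2} f_{M ι(M)} and φ(x) = ⟨Φ, xΦ⟩. Then fermionic standard quantum detailed balance holds: φ(τ(a) b) = φ(a τ^ι(b)) for all a ∈ A(I) and b ∈ A(ι(I)). -/
noncomputable section
open scoped InnerProductSpace ComplexConjugate
open ContinuousLinearMap

/-! The unitary `U * V` implements `σ` on `I` and `σ^ι` on `J`, so it sends `f_{M ι(M)}` to
`f_{σ(M) ι(σ(M))}`. Pairs `a*_m a*_{ι m}` of creation operators commute, so this is `f_{N ι(N)}`
for the enumeration `N ∈ D_I` of `σ(M)`, which has the same weight as `M`. Hence `Φ` is fixed by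
`U * V` and by `V * U`, i.e. `U Φ = V* Φ` and `V Φ = U* Φ`. As `σ` fixes `ι(I)` and `σ^ι` fixes
`I`, `U` commutes with `A(ι(I))` and `V` with `A(I)`, whence
`⟨Φ, U* a U b Φ⟩ = ⟨U Φ, a b U Φ⟩ = ⟨V* Φ, a b V* Φ⟩ = ⟨Φ, a V b V* Φ⟩`,
and symmetrically for the other half of `τ`. -/

namespace Fermion

variable {L : Type} [LinearOrder L]

lemma jwSign_insert (l m : L) {S : Finset L} (hm : m ∉ S) :
    jwSign l (insert m S) = (if m < l then (-1 : ℂ) else 1) * jwSign l S := by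
  unfold jwSign
  rw [Finset.filter_insert]
  split
  · rw [Finset.card_insert_of_notMem (fun h => hm (Finset.mem_of_mem_filter m h)), pow_succ]
    ring
  · rw [one_mul]

def invCount : List L → ℕ
  | [] => 0
  | l :: M => M.countP (fun m => decide (m < l)) + invCount M

section Creation

variable [Fintype L]

lemma clm_ext_single {X Y : FockSpace L →L[ℂ] FockSpace L}
    (h : ∀ S : Finset L, X (EuclideanSpace.single S 1) = Y (EuclideanSpace.single S 1)) :
    X = Y := by
  apply ContinuousLinearMap.coe_injective
  apply (EuclideanSpace.basisFun (Finset L) ℂ).toBasis.ext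
  simpa [OrthonormalBasis.coe_toBasis, EuclideanSpace.basisFun_apply] using h

lemma cre_single (l : L) (S : Finset L) :
    cre l (EuclideanSpace.single S 1) =
      if l ∈ S then 0 else jwSign l S • EuclideanSpace.single (insert l S) 1 := by
  have h := (EuclideanSpace.basisFun (Finset L) ℂ).toBasis.constr_basis ℂ
    (fun T => if l ∈ T then (0 : FockSpace L)
      else jwSign l T • EuclideanSpace.single (insert l T) 1) S
  rw [OrthonormalBasis.coe_toBasis, EuclideanSpace.basisFun_apply] at h
  exact h

lemma star_cre (l : L) : star (cre l) = ann l := rfl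

lemma cre_mul_cre (l m : L) : cre l * cre m = -(cre m * cre l) := by
  apply clm_ext_single
  intro S
  simp only [mul_apply_eq_comp, neg_apply]
  rcases eq_or_ne l m with rfl | hne
  · by_cases hl : l ∈ S <;> simp [cre_single, hl]
  by_cases hm : m ∈ S
  · by_cases hl : l ∈ S <;> simp [cre_single, hm, hl]
  by_cases hl : l ∈ S
  · simp [cre_single, hm, hl]
  rw [cre_single m S, if_neg hm, map_smul, cre_single l (insert m S),
    if_neg (by simp [hne, hl]), cre_single l S, if_neg hl, map_smul,
    cre_single m (insert l S), if_neg (by simp [hne.symm, hm]), smul_smul, smul_smul,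
    Finset.insert_comm l m S, ← neg_smul, jwSign_insert l m hm, jwSign_insert m l hl]
  congr 1
  rcases hne.lt_or_gt with h | h
  · rw [if_neg (not_lt.2 h.le), if_pos h]; ring
  · rw [if_pos h, if_neg (not_lt.2 h.le)]; ring

lemma cre_cre_apply (l m : L) (v : FockSpace L) : cre l (cre m v) = -cre m (cre l v) :=
  DFunLike.congr_fun (cre_mul_cre l m) v

lemma cre_cre_cre_cre_apply (a a' b b' : L) (v : FockSpace L) :
    cre a (cre a' (cre b (cre b' v))) = cre b (cre b' (cre a (cre a' v))) := by
  rw [cre_cre_apply a' b, map_neg, cre_cre_apply a b, neg_neg, cre_cre_apply a' b',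
    map_neg, map_neg, cre_cre_apply a b', map_neg, neg_neg]

end Creation

section Fvec

variable [Fintype L]

@[simp]
lemma fvec_cons (l : L) (M : List L) : fvec (l :: M) = cre l (fvec M) := rfl

lemma fvec_eq_smul_single {M : List L} (h : M.Nodup) :
    fvec M = ((-1 : ℂ) ^ invCount M) • EuclideanSpace.single M.toFinset 1 := by
  induction M with
  | nil => simp [fvec, invCount, vac]
  | cons l M ih =>
    obtain ⟨hl, hM⟩ := List.nodup_cons.1 h
    have hlM : l ∉ M.toFinset := by simpa using hl
    have hcard : (M.toFinset.filter (fun k => k < l)).card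
        = M.countP (fun m => decide (m < l)) := by
      rw [List.countP_eq_length_filter, ← List.toFinset_card_of_nodup (hM.filter _),
        List.toFinset_filter]
      simp
    rw [fvec_cons, ih hM, map_smul, cre_single, if_neg hlM, List.toFinset_cons, smul_smul,
      invCount, jwSign, hcard, pow_add, mul_comm]

lemma clm_ext_fvec {X Y : FockSpace L →L[ℂ] FockSpace L}
    (h : ∀ M : List L, X (fvec M) = Y (fvec M)) : X = Y := by
  refine clm_ext_single fun S => ?_
  set M := S.sort (· ≤ ·)
  have hM : EuclideanSpace.single S (1 : ℂ) = ((-1 : ℂ) ^ invCount M) • fvec M := by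
    rw [fvec_eq_smul_single (S.sort_nodup _), Finset.sort_toFinset, smul_smul, ← mul_pow]
    norm_num
  rw [hM, map_smul, map_smul, h]

lemma fvec_append_cons (M N : List L) (l : L) :
    fvec (M ++ l :: N) = ((-1 : ℂ) ^ M.length) • cre l (fvec (M ++ N)) := by
  induction M with
  | nil => simp
  | cons x M ih =>
    rw [List.cons_append, fvec_cons, ih, map_smul, cre_cre_apply, List.length_cons, pow_succ,
      mul_neg_one, neg_smul, smul_neg, List.cons_append, fvec_cons]

lemma fvec_cons_append_map (f : L → L) (x : L) (M : List L) :
    fvec ((x :: M) ++ (x :: M).map f)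
      = ((-1 : ℂ) ^ M.length) • cre x (cre (f x) (fvec (M ++ M.map f))) := by
  rw [List.map_cons, List.cons_append, fvec_cons, fvec_append_cons, map_smul]

lemma fvec_append_map_perm (f : L → L) {M N : List L} (h : M.Perm N) :
    fvec (M ++ M.map f) = fvec (N ++ N.map f) := by
  induction h with
  | nil => rfl
  | cons x h ih => rw [fvec_cons_append_map, fvec_cons_append_map, ih, h.length_eq]
  | swap x y M =>
    simp only [fvec_cons_append_map, map_smul, smul_smul, List.length_cons]
    rw [cre_cre_cre_cre_apply]
  | trans _ _ ih₁ ih₂ => rw [ih₁, ih₂]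

end Fvec

lemma apply_mem_iff_of_forall_notMem {σ : Equiv.Perm L} {I : Finset L}
    (hσ : ∀ l ∉ I, σ l = l) (l : L) : σ l ∈ I ↔ l ∈ I := by
  refine ⟨fun h => ?_, fun hl => ?_⟩
  · by_contra hl
    exact hl (hσ l hl ▸ h)
  · by_contra h
    rw [σ.injective (hσ (σ l) h)] at h
    exact h hl

section Phi

variable [Fintype L]

lemma Phi_fixed_of_fvec_map (D : Finset L → List L) (hD : IsEnum D) (p : Finset L → ℝ)
    (I : Finset L) (ι : L → L) (σ : Equiv.Perm L) (hσ : ∀ l ∉ I, σ l = l)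
    (hlen : ∀ S ∈ I.powerset, ∀ T ∈ I.powerset, S.card = T.card → p S = p T)
    (ρ : L → L) (hρ : ∀ l ∈ I, ρ l = σ l) (hρι : ∀ l ∈ I, ρ (ι l) = ι (σ l))
    (W : FockSpace L →L[ℂ] FockSpace L) (hW : ∀ M, W (fvec M) = fvec (M.map ρ)) :
    W (Phi D p I ι) = Phi D p I ι := by
  have himage : ∀ (τ : Equiv.Perm L), (∀ l ∉ I, τ l = l) →
      ∀ S ∈ I.powerset, S.image τ ∈ I.powerset := by
    intro τ hτ S hS
    simp only [Finset.mem_powerset, Finset.image_subset_iff] at hS ⊢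
    exact fun x hx => (apply_mem_iff_of_forall_notMem hτ x).2 (hS hx)
  have hσ' : ∀ l ∉ I, σ.symm l = l := fun l hl => σ.symm_apply_eq.2 (hσ l hl).symm
  unfold Phi
  simp only [map_sum, map_smul, hW]
  refine Finset.sum_nbij' (fun S => S.image σ) (fun T => T.image σ.symm) (himage σ hσ)
    (himage σ.symm hσ') (fun S _ => by simp [Finset.image_image])
    (fun T _ => by simp [Finset.image_image]) ?_
  intro S hS
  have hDS : ∀ x ∈ D S, x ∈ I := fun x hx =>
    Finset.mem_powerset.1 hS ((hD S).2 ▸ List.mem_toFinset.2 hx)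
  have hperm : ((D S).map σ).Perm (D (S.image σ)) := by
    refine List.perm_of_nodup_nodup_toFinset_eq ((hD S).1.map σ.injective) (hD _).1 ?_
    rw [(hD _).2]
    nth_rewrite 2 [← (hD S).2]
    ext; simp
  have hmapι : ((D S).map ι).map ρ = ((D S).map σ).map ι := by
    rw [List.map_map, List.map_map]
    exact List.map_congr_left fun x hx => hρι x (hDS x hx)
  rw [List.map_append, List.map_congr_left fun x hx => hρ x (hDS x hx), hmapι,
    fvec_append_map_perm ι hperm,
    hlen S hS _ (himage σ hσ S hS) (Finset.card_image_of_injective S σ.injective).symm]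

end Phi

section Commute

variable [Fintype L]

lemma star_apply_fvec_of_mem_unitary {W : FockSpace L →L[ℂ] FockSpace L}
    (hWu : W ∈ unitary (FockSpace L →L[ℂ] FockSpace L)) {ρ : Equiv.Perm L}
    (hW : ∀ M, W (fvec M) = fvec (M.map ρ)) (M : List L) :
    star W (fvec M) = fvec (M.map ρ.symm) := by
  calc star W (fvec M) = (star W * W) (fvec (M.map ρ.symm)) := by
        rw [mul_apply_eq_comp, hW, List.map_map]; simp
    _ = fvec (M.map ρ.symm) := by rw [Unitary.star_mul_self_of_mem hWu]; rfl

lemma commute_cre_of_fvec_map {X : FockSpace L →L[ℂ] FockSpace L} {ρ : L → L}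
    (hX : ∀ M, X (fvec M) = fvec (M.map ρ)) {l : L} (hl : ρ l = l) : Commute X (cre l) :=
  clm_ext_fvec fun M => by
    simp only [mul_apply_eq_comp]
    rw [← fvec_cons, hX, hX, List.map_cons, hl, fvec_cons]

lemma commute_of_mem_A {K : Finset L} {W : FockSpace L →L[ℂ] FockSpace L}
    (hW : ∀ l ∈ K, Commute W (cre l)) (hW' : ∀ l ∈ K, Commute (star W) (cre l))
    {x : FockSpace L →L[ℂ] FockSpace L} (hx : x ∈ A K) : Commute W x := by
  have hA : A K ≤ StarSubalgebra.centralizer ℂ {W} := by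
    refine StarAlgebra.adjoin_le ?_
    rintro _ ⟨l, hl, rfl⟩
    rw [SetLike.mem_coe, StarSubalgebra.mem_centralizer_iff]
    rintro g rfl
    have hann : Commute g (ann l) := by
      simpa only [star_star, star_cre] using (hW' l hl).star_star
    have hann' : Commute (star g) (ann l) := by
      simpa only [star_cre] using (hW l hl).star_star
    exact ⟨hann.eq, hann'.eq⟩
  exact ((StarSubalgebra.mem_centralizer_iff ℂ).1 (hA hx) W rfl).1

lemma commute_of_fvec_map_of_mem_A {W : FockSpace L →L[ℂ] FockSpace L}
    (hWu : W ∈ unitary (FockSpace L →L[ℂ] FockSpace L)) {ρ : Equiv.Perm L}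
    (hW : ∀ M, W (fvec M) = fvec (M.map ρ)) {K : Finset L} (hK : ∀ l ∈ K, ρ l = l)
    {x : FockSpace L →L[ℂ] FockSpace L} (hx : x ∈ A K) :
    Commute W x ∧ Commute (star W) x := by
  have hcre : ∀ l ∈ K, Commute W (cre l) := fun l hl => commute_cre_of_fvec_map hW (hK l hl)
  have hcre' : ∀ l ∈ K, Commute (star W) (cre l) := fun l hl =>
    commute_cre_of_fvec_map (star_apply_fvec_of_mem_unitary hWu hW)
      (ρ.symm_apply_eq.2 (hK l hl).symm)
  exact ⟨commute_of_mem_A hcre hcre' hx,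
    commute_of_mem_A hcre' (by simpa only [star_star] using hcre) hx⟩

end Commute

section DetailedBalance

variable {E : Type*} [NormedAddCommGroup E] [InnerProductSpace ℂ E] [CompleteSpace E]

lemma apply_eq_star_apply_of_mul_apply_eq {W X : E →L[ℂ] E} (hW : W ∈ unitary (E →L[ℂ] E))
    {v : E} (h : (W * X) v = v) : X v = star W v :=
  calc X v = (star W * W) (X v) := by rw [Unitary.star_mul_self_of_mem hW]; rfl
    _ = star W ((W * X) v) := rfl
    _ = star W v := by rw [h]

lemma inner_star_mul_mul_apply (W Y : E →L[ℂ] E) (v : E) :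
    ⟪v, (star W * Y * W) v⟫_ℂ = ⟪W v, Y (W v)⟫_ℂ :=
  adjoint_inner_right W v (Y (W v))

theorem inner_detailed_balance {U V a b : E →L[ℂ] E} {Φ : E}
    (hUΦ : U Φ = star V Φ) (hVΦ : V Φ = star U Φ)
    (hVa : Commute V a) (hVa' : Commute (star V) a)
    (hUb : Commute U b) (hUb' : Commute (star U) b) :
    ⟪Φ, ((1/2 : ℂ) • (star U * a * U + U * a * star U) * b) Φ⟫_ℂ
      = ⟪Φ, (a * ((1/2 : ℂ) • (star V * b * V + V * b * star V))) Φ⟫_ℂ := by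
  have h₁ : ⟪Φ, (star U * a * U * b) Φ⟫_ℂ = ⟪Φ, (a * (V * b * star V)) Φ⟫_ℂ := by
    calc ⟪Φ, (star U * a * U * b) Φ⟫_ℂ = ⟪Φ, (star U * (a * b) * U) Φ⟫_ℂ := by
          rw [mul_assoc _ U, hUb.eq]; simp only [mul_assoc]
      _ = ⟪Φ, (star (star V) * (a * b) * star V) Φ⟫_ℂ := by
          rw [inner_star_mul_mul_apply, inner_star_mul_mul_apply, hUΦ]
      _ = ⟪Φ, (a * (V * b * star V)) Φ⟫_ℂ := by
          rw [star_star, ← mul_assoc, hVa.eq]; simp only [mul_assoc]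
  have h₂ : ⟪Φ, (U * a * star U * b) Φ⟫_ℂ = ⟪Φ, (a * (star V * b * V)) Φ⟫_ℂ := by
    calc ⟪Φ, (U * a * star U * b) Φ⟫_ℂ = ⟪Φ, (star (star U) * (a * b) * star U) Φ⟫_ℂ := by
          rw [star_star, mul_assoc _ (star U), hUb'.eq]; simp only [mul_assoc]
      _ = ⟪Φ, (star V * (a * b) * V) Φ⟫_ℂ := by
          rw [inner_star_mul_mul_apply, inner_star_mul_mul_apply, hVΦ]
      _ = ⟪Φ, (a * (star V * b * V)) Φ⟫_ℂ := by
          rw [← mul_assoc, hVa'.eq]; simp only [mul_assoc]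
  simp only [smul_mul_assoc, mul_smul_comm, add_mul, mul_add, smul_apply, add_apply,
    inner_smul_right, inner_add_right, h₁, h₂]
  ring

end DetailedBalance

set_option maxHeartbeats 1000000

theorem fermionic_detailed_balance_example_general
    {L : Type} [Fintype L] [LinearOrder L]
    (I J : Finset L) (ι : L → L)
    (himg : I.image ι = J) (hIJ : Disjoint I J)
    (D : Finset L → List L) (hD : IsEnum D)
    (σ : Equiv.Perm L) (hσ : ∀ l ∉ I, σ l = l)
    (σι : Equiv.Perm L) (hσι : ∀ l ∈ I, σι (ι l) = ι (σ l)) (hσι' : ∀ l ∉ J, σι l = l)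
    (U : FockSpace L →L[ℂ] FockSpace L)
    (hUu : U ∈ unitary (FockSpace L →L[ℂ] FockSpace L))
    (hU : ∀ M : List L, U (fvec M) = fvec (M.map σ))
    (V : FockSpace L →L[ℂ] FockSpace L)
    (hVu : V ∈ unitary (FockSpace L →L[ℂ] FockSpace L))
    (hV : ∀ M : List L, V (fvec M) = fvec (M.map σι))
    (p : Finset L → ℝ)
    (hlen : ∀ S ∈ I.powerset, ∀ T ∈ I.powerset, S.card = T.card → p S = p T) :
    ∀ a ∈ A I, ∀ b ∈ A (I.image ι),
      phi D p I ι (((1/2 : ℂ) • (star U * a * U + U * a * star U)) * b)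
        = phi D p I ι (a * ((1/2 : ℂ) • (star V * b * V + V * b * star V))) := by
  intro a ha b hb
  have hI : ∀ l ∈ I, l ∉ J := fun l hl => Finset.disjoint_left.1 hIJ hl
  have hJ : ∀ l ∈ I.image ι, l ∉ I := fun l hl => Finset.disjoint_right.1 hIJ (himg ▸ hl)
  have hσI : ∀ l ∈ I, σ l ∈ I := fun l => (apply_mem_iff_of_forall_notMem hσ l).2
  have hUV : (U * V) (Phi D p I ι) = Phi D p I ι :=
    Phi_fixed_of_fvec_map D hD p I ι σ hσ hlen (σ ∘ σι)
      (fun l hl => by simp [hσι' l (hI l hl)])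
      (fun l hl => by simp [hσι l hl, hσ _ (hJ _ (Finset.mem_image_of_mem ι (hσI l hl)))])
      (U * V) (fun M => by simp [mul_apply_eq_comp, hU, hV, List.map_map])
  have hVU : (V * U) (Phi D p I ι) = Phi D p I ι :=
    Phi_fixed_of_fvec_map D hD p I ι σ hσ hlen (σι ∘ σ)
      (fun l hl => by simp [hσι' _ (hI _ (hσI l hl))])
      (fun l hl => by simp [hσι l hl, hσ _ (hJ _ (Finset.mem_image_of_mem ι hl))])
      (V * U) (fun M => by simp [mul_apply_eq_comp, hU, hV, List.map_map])
  obtain ⟨hUb, hUb'⟩ := commute_of_fvec_map_of_mem_A hUu hU (fun l hl => hσ l (hJ l hl)) hb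
  obtain ⟨hVa, hVa'⟩ := commute_of_fvec_map_of_mem_A hVu hV (fun l hl => hσι' l (hI l hl)) ha
  exact inner_detailed_balance (apply_eq_star_apply_of_mul_apply_eq hVu hVU)
    (apply_eq_star_apply_of_mul_apply_eq hUu hUV) hVa hVa' hUb hUb'

/-- Main example. Let `I ⊆ L` be finite, `ι : I → J` a bijection onto `J`
with `I ∩ J = ∅`, and `σ : L → L` a permutation of `I` (identity on `L \ I`). Let `U` be the
unitary with `U f_∅ = f_∅`, `U f_{(l₁,…,lₙ)} = f_{(σ(l₁),…,σ(lₙ))}`, and `V` the unitary with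
`V f_∅ = f_∅`, `V f_{(l₁,…,lₙ)} = f_{(σ^ι(l₁),…,σ^ι(lₙ))}`, where `σ^ι = ι∘σ∘ι⁻¹` on `J` and
the identity on `L \ J`. Define `τ(a) = (1/2)(U* a U + U a U*)` on `A(I)` and
`τ^ι(b) = (1/2)(V* b V + V b V*)` on `A(ι(I))`. If `(p_M)_{M ∈ D_I}` is a probability
distribution with `p_M = p_N` whenever `M, N ∈ D_I` have the same length, then fermionic
standard quantum detailed balance holds: `φ(τ(a) b) = φ(a τ^ι(b))` for all `a ∈ A(I)`,
`b ∈ A(ι(I))`. -/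
theorem fermionic_detailed_balance_example
    {L : Type} [Fintype L] [LinearOrder L]
    (I J : Finset L) (ι : L → L)
    (hinj : Set.InjOn ι (I : Set L)) (himg : I.image ι = J) (hIJ : Disjoint I J)
    (D : Finset L → List L) (hD : IsEnum D)
    (σ : Equiv.Perm L) (hσ : ∀ l ∉ I, σ l = l)
    (σι : Equiv.Perm L) (hσι : ∀ l ∈ I, σι (ι l) = ι (σ l)) (hσι' : ∀ l ∉ J, σι l = l)
    (U : FockSpace L →L[ℂ] FockSpace L)
    (hUu : U ∈ unitary (FockSpace L →L[ℂ] FockSpace L))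
    (hU : ∀ M : List L, U (fvec M) = fvec (M.map σ))
    (V : FockSpace L →L[ℂ] FockSpace L)
    (hVu : V ∈ unitary (FockSpace L →L[ℂ] FockSpace L))
    (hV : ∀ M : List L, V (fvec M) = fvec (M.map σι))
    (p : Finset L → ℝ)
    (hp0 : ∀ S ∈ I.powerset, 0 ≤ p S) (hp1 : ∑ S ∈ I.powerset, p S = 1)
    (hlen : ∀ S ∈ I.powerset, ∀ T ∈ I.powerset, S.card = T.card → p S = p T) :
    ∀ a ∈ A I, ∀ b ∈ A (I.image ι),
      phi D p I ι (((1/2 : ℂ) • (star U * a * U + U * a * star U)) * b)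
        = phi D p I ι (a * ((1/2 : ℂ) • (star V * b * V + V * b * star V))) :=
  fermionic_detailed_balance_example_general I J ι himg hIJ D hD σ hσ σι hσι hσι' U hUu hU V hVu hV
    p hlen

end Fermion
end
end

section
/- (Standard quantum detailed balance for permutation dynamics) Let K be an n-dimensional complex Hilbert space with orthonormal basis d_1,…,d_n, let ϖ be a permutation of {1,…,n}, and let W : K → K be the unitary with W d_j = d_{ϖ(j)}. Define α : B(K) → B(K) by α(a) = (1/2)(W* a W + W a W*). Let p_1,…,p_n be probabilities such that p_j = p_k whenever j and k lie in the same cycle of ϖ, set Ω = Σ_{j=1}^n p_j^{1/2} d_j ⊗ d_j ∈ K ⊗ K and ω(x) = ⟨Ω, xΩ⟩ for x ∈ B(K ⊗ K). Then standard quantum detailed balance holds: ω(α(a) ⊗ b) = ω(a ⊗ α(b)) for all a, b ∈ B(K). -/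
/-!
**Statement 17** (Standard quantum detailed balance for permutation dynamics).
`K` is an `n`-dimensional complex Hilbert space with orthonormal basis `d_1, …, d_n`; its
operator algebra `B(K)` is realized as `Matrix (Fin n) (Fin n) ℂ` (in the basis `d_j`), the
operator `a ⊗ b` on `K ⊗ K` as the Kronecker product `a ⊗ₖ b` (acting on
`EuclideanSpace ℂ (Fin n × Fin n)`, where `d_j ⊗ d_k` is the basis vector indexed by
`(j,k)`), and `⟨x, y⟩ = Σ conj(x i) * y i` (linear in the second slot).
-/

noncomputable section
open scoped Kronecker Matrix

namespace PermDynamics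

/-- The unitary `W` with `W d_j = d_{ϖ(j)}`. -/
def W (n : ℕ) (ϖ : Equiv.Perm (Fin n)) : Matrix (Fin n) (Fin n) ℂ :=
  Matrix.of fun i j => if i = ϖ j then 1 else 0

/-- The dynamics `α(a) = (1/2)(W* a W + W a W*)`. -/
def dyn (n : ℕ) (ϖ : Equiv.Perm (Fin n)) (a : Matrix (Fin n) (Fin n) ℂ) :
    Matrix (Fin n) (Fin n) ℂ :=
  (1/2 : ℂ) • ((W n ϖ)ᴴ * a * W n ϖ + W n ϖ * a * (W n ϖ)ᴴ)

/-- The entangled vector `Ω = Σ_j p_j^{1/2} d_j ⊗ d_j ∈ K ⊗ K`. -/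
def Omega (n : ℕ) (p : Fin n → ℝ) : Fin n × Fin n → ℂ :=
  fun jk => if jk.1 = jk.2 then (Real.sqrt (p jk.1) : ℂ) else 0

/-- The state `ω(x) = ⟨Ω, x Ω⟩` on `B(K ⊗ K)`. -/
def omega (n : ℕ) (p : Fin n → ℝ) (x : Matrix (Fin n × Fin n) (Fin n × Fin n) ℂ) : ℂ :=
  star (Omega n p) ⬝ᵥ x.mulVec (Omega n p)

/-!
Write `s_j = p_j^{1/2}`. Since `Ω` is supported on the diagonal,
`ω(a ⊗ b) = Σ_{j,k} s_j s_k a_{jk} b_{jk}`, which is symmetric in `a` and `b`. Conjugation by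
`W` permutes matrix entries, `(W* a W)_{jk} = a_{ϖ j, ϖ k}`, and `s` is `ϖ`-invariant because
`j` and `ϖ j` lie in the same cycle; reindexing the double sum by `ϖ` therefore moves `W* · W`
from one tensor factor to the other as `W · W*`. Averaging the two
conjugations gives detailed balance.
-/

variable {n : ℕ}

lemma omega_kronecker (p : Fin n → ℝ) (a b : Matrix (Fin n) (Fin n) ℂ) :
    omega n p (a ⊗ₖ b) =
      ∑ j, ∑ k, (Real.sqrt (p j) : ℂ) * Real.sqrt (p k) * (a j k * b j k) := by
  unfold omega Omega
  simp [dotProduct, Matrix.mulVec, Fintype.sum_prod_type, Finset.mul_sum, apply_ite,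
    mul_comm, mul_left_comm]

lemma omega_kronecker_comm (p : Fin n → ℝ) (a b : Matrix (Fin n) (Fin n) ℂ) :
    omega n p (a ⊗ₖ b) = omega n p (b ⊗ₖ a) := by
  simp only [omega_kronecker, mul_comm (a _ _)]

lemma omega_add (p : Fin n → ℝ) (x y : Matrix (Fin n × Fin n) (Fin n × Fin n) ℂ) :
    omega n p (x + y) = omega n p x + omega n p y := by
  simp only [omega, Matrix.add_mulVec, dotProduct_add]

lemma omega_smul (p : Fin n → ℝ) (c : ℂ) (x : Matrix (Fin n × Fin n) (Fin n × Fin n) ℂ) :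
    omega n p (c • x) = c * omega n p x := by
  simp only [omega, Matrix.smul_mulVec, dotProduct_smul, smul_eq_mul]

lemma conjTranspose_W_mul_mul_W_apply (ϖ : Equiv.Perm (Fin n))
    (a : Matrix (Fin n) (Fin n) ℂ) (j k : Fin n) :
    ((W n ϖ)ᴴ * a * W n ϖ) j k = a (ϖ j) (ϖ k) := by
  simp [W, Matrix.mul_apply, Matrix.conjTranspose_apply, ite_mul, apply_ite]

lemma W_mul_mul_conjTranspose_W_apply (ϖ : Equiv.Perm (Fin n))
    (a : Matrix (Fin n) (Fin n) ℂ) (j k : Fin n) :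
    (W n ϖ * a * (W n ϖ)ᴴ) j k = a (ϖ⁻¹ j) (ϖ⁻¹ k) := by
  simp only [W, Matrix.mul_apply, Matrix.conjTranspose_apply, Matrix.of_apply]
  simp [ite_mul, apply_ite, ← Equiv.symm_apply_eq, Equiv.Perm.inv_def]

section Invariant

variable {ϖ : Equiv.Perm (Fin n)} {p : Fin n → ℝ} (hp : ∀ j, p (ϖ j) = p j)
include hp

lemma omega_conjTranspose_W_kronecker (a b : Matrix (Fin n) (Fin n) ℂ) :
    omega n p (((W n ϖ)ᴴ * a * W n ϖ) ⊗ₖ b) =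
      omega n p (a ⊗ₖ (W n ϖ * b * (W n ϖ)ᴴ)) := by
  simp only [omega_kronecker, conjTranspose_W_mul_mul_W_apply, W_mul_mul_conjTranspose_W_apply]
  refine Fintype.sum_equiv ϖ _ _ fun j => Fintype.sum_equiv ϖ _ _ fun k => ?_
  simp [hp]

lemma omega_W_kronecker (a b : Matrix (Fin n) (Fin n) ℂ) :
    omega n p ((W n ϖ * a * (W n ϖ)ᴴ) ⊗ₖ b) =
      omega n p (a ⊗ₖ ((W n ϖ)ᴴ * b * W n ϖ)) := by
  rw [omega_kronecker_comm, ← omega_conjTranspose_W_kronecker hp, omega_kronecker_comm]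

end Invariant

lemma apply_perm_eq_of_sameCycle {α β : Type*} {σ : Equiv.Perm α} {f : α → β}
    (hf : ∀ j k, σ.SameCycle j k → f j = f k) (j : α) : f (σ j) = f j :=
  (hf j (σ j) (Equiv.Perm.sameCycle_apply_right.mpr (Equiv.Perm.SameCycle.refl σ j))).symm

theorem standard_detailed_balance_for_permutation_dynamics_general
    (n : ℕ) (ϖ : Equiv.Perm (Fin n)) (p : Fin n → ℝ)
    (hcyc : ∀ j k, ϖ.SameCycle j k → p j = p k) :
    ∀ a b : Matrix (Fin n) (Fin n) ℂ,
      omega n p ((dyn n ϖ a) ⊗ₖ b) = omega n p (a ⊗ₖ (dyn n ϖ b)) := by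
  intro a b
  have hp := apply_perm_eq_of_sameCycle hcyc
  simp only [dyn, Matrix.smul_kronecker, Matrix.kronecker_smul, Matrix.add_kronecker,
    Matrix.kronecker_add, omega_smul, omega_add, omega_conjTranspose_W_kronecker hp,
    omega_W_kronecker hp, add_comm]

/-- If the probabilities `p_1, …, p_n` satisfy `p_j = p_k` whenever `j` and
`k` lie in the same cycle of the permutation `ϖ`, then standard quantum detailed balance
holds for `α(a) = (1/2)(W* a W + W a W*)`: `ω(α(a) ⊗ b) = ω(a ⊗ α(b))` for all
`a, b ∈ B(K)`. -/
theorem standard_detailed_balance_for_permutation_dynamics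
    (n : ℕ) (ϖ : Equiv.Perm (Fin n)) (p : Fin n → ℝ)
    (hp0 : ∀ j, 0 ≤ p j) (hp1 : ∑ j, p j = 1)
    (hcyc : ∀ j k, ϖ.SameCycle j k → p j = p k) :
    ∀ a b : Matrix (Fin n) (Fin n) ℂ,
      omega n p ((dyn n ϖ a) ⊗ₖ b) = omega n p (a ⊗ₖ (dyn n ϖ b)) :=
  standard_detailed_balance_for_permutation_dynamics_general n ϖ p hcyc

end PermDynamics
end
end
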